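/- arXiv:1705.02760 — 2 statements merged into one kernel-verified Lean document; each statement's English description precedes it below -/
import Mathlib

section
/- Let M be a lattice (finitely generated free abelian group) and S ⊆ M a finitely generated subsemigroup with S - S = M. Let σ_S ⊆ M ⊗ ℝ be the cone generated by S, and let τ_1, ..., τ_q be the codimension-one faces of σ_S. Then the semigroup S' = ⋂_i (S - (S ∩ τ_i)) satisfies S ⊆ S' ⊆ M ∩ σ_S. -/
open scoped BigOperators

/-- The convex cone generated by a set `s` in a real vector space. -/
def coneOf {V : Type} [AddCommGroup V] [Module ℝ V] (s : Set V) : Set V :=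
  {x | ∃ (n : ℕ) (c : Fin n → ℝ) (v : Fin n → V),
    (∀ i, 0 ≤ c i) ∧ (∀ i, v i ∈ s) ∧ x = ∑ i, c i • v i}

/-- `τ` is a face of the cone `σ`. -/
def IsFaceOf {V : Type} [AddCommGroup V] [Module ℝ V] (τ σ : Set V) : Prop :=
  τ ⊆ σ ∧ (0 : V) ∈ τ ∧ (∀ x ∈ τ, ∀ y ∈ τ, x + y ∈ τ) ∧
    (∀ x ∈ τ, ∀ c : ℝ, 0 ≤ c → c • x ∈ τ) ∧
    ∀ x ∈ σ, ∀ y ∈ σ, x + y ∈ τ → x ∈ τ ∧ y ∈ τ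

/-- The dimension of the linear span of a set. -/
noncomputable def coneDim {V : Type} [AddCommGroup V] [Module ℝ V] (s : Set V) : ℕ :=
  Module.finrank ℝ (Submodule.span ℝ s)

/-- `τ` is a codimension-one face of the cone `σ`. -/
def IsCodimOneFace {V : Type} [AddCommGroup V] [Module ℝ V] (τ σ : Set V) : Prop :=
  IsFaceOf τ σ ∧ coneDim τ + 1 = coneDim σ

/-- `M` is a (full) lattice in the real vector space `V`. -/
def IsLattice {V : Type} [AddCommGroup V] [Module ℝ V] (M : AddSubgroup V) : Prop :=
  ∃ (n : ℕ) (b : Fin n → V), LinearIndependent ℝ b ∧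
    Submodule.span ℝ (Set.range b) = ⊤ ∧ M = AddSubgroup.closure (Set.range b)

/-- The group of differences `A - A` of a set `A`. -/
def latticeOf {V : Type} [AddCommGroup V] (A : Set V) : Set V :=
  {x | ∃ a ∈ A, ∃ b ∈ A, x = a - b}

/-- The group of differences `(A ∩ σ) - (A ∩ σ)`. -/
def diffSet {V : Type} [AddCommGroup V] (A σ : Set V) : Set V :=
  {x | ∃ a ∈ A ∩ σ, ∃ b ∈ A ∩ σ, x = a - b}

/-
If `m ∈ S - S` lies outside `σ_S`, Farkas' lemma gives a linear form `u`, nonnegative on the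
finitely many generators of `S`, with `u m < 0`. Among such forms take one whose zeros among the
generators span a subspace of maximal dimension. If that dimension were smaller than
`dim σ_S - 1`, a form vanishing on this subspace and on `m` but not on all generators could be
added to `u` until one more generator becomes a zero, so `τ = σ_S ∩ ker u` is a facet. Writing
`m = s - t` with `t ∈ τ` then gives `u m = u s ≥ 0`, a contradiction.
-/

open Module Submodule

theorem coneOf_eq_hull {V : Type} [AddCommGroup V] [Module ℝ V] (s : Set V) :
    coneOf s = (PointedCone.hull ℝ s : Set V) := by
  ext x
  rw [SetLike.mem_coe, Submodule.mem_span_set']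
  constructor
  · rintro ⟨n, c, v, hc, hv, rfl⟩
    exact ⟨n, fun i => ⟨c i, hc i⟩, fun i => ⟨v i, hv i⟩, rfl⟩
  · rintro ⟨n, c, v, rfl⟩
    exact ⟨n, fun i => c i, fun i => v i, fun i => (c i).2, fun i => (v i).2, rfl⟩

section Separation

variable {V : Type*} [AddCommGroup V] [Module ℝ V]

theorem Module.Dual.nonneg_of_mem_hull {u : Dual ℝ V} {s : Set V} (hu : ∀ y ∈ s, 0 ≤ u y)
    {x : V} (hx : x ∈ PointedCone.hull ℝ s) : 0 ≤ u x := by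
  induction hx using Submodule.span_induction with
  | mem y hy => exact hu y hy
  | zero => simp
  | add y z _ _ hy hz => simpa using add_nonneg hy hz
  | smul c y _ hy => simpa [← Nonneg.coe_smul] using mul_nonneg c.2 hy

theorem Submodule.exists_dual_neg_of_notMem {W : Submodule ℝ V} {a : V} (ha : a ∉ W) :
    ∃ v : Dual ℝ V, v a < 0 ∧ ∀ x ∈ W, v x = 0 := by
  obtain ⟨v, hva, hvW⟩ := W.exists_dual_map_eq_bot_of_notMem ha inferInstance
  have hvW' : ∀ x ∈ W, v x = 0 := fun x hx => (mem_bot ℝ).mp (hvW ▸ mem_map_of_mem hx)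
  rcases hva.lt_or_gt with h | h
  · exact ⟨v, h, hvW'⟩
  · exact ⟨-v, by simpa using h, fun x hx => by simp [hvW' x hx]⟩

theorem exists_dual_nonneg_neg_of_notMem_hull (s : Finset V) {x : V}
    (hx : x ∉ PointedCone.hull ℝ (s : Set V)) :
    ∃ u : Dual ℝ V, (∀ y ∈ s, 0 ≤ u y) ∧ u x < 0 := by
  classical
  induction hn : s.card using Nat.strong_induction_on generalizing s x with
  | _ n ih =>
  rcases s.eq_empty_or_nonempty with rfl | ⟨a, ha⟩
  · have hx0 : x ∉ (⊥ : Submodule ℝ V) := fun h => hx ((mem_bot ℝ).mp h ▸ zero_mem _)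
    obtain ⟨u, hu, -⟩ := exists_dual_neg_of_notMem hx0
    exact ⟨u, by simp, hu⟩
  set t := s.erase a
  have hs : PointedCone.hull ℝ (s : Set V) = PointedCone.hull ℝ (insert a t) := by
    rw [← Finset.coe_insert, Finset.insert_erase ha]
  have ht : t.card < n := hn ▸ Finset.card_erase_lt_of_mem ha
  have hxt : x ∉ PointedCone.hull ℝ (t : Set V) :=
    fun h => hx (span_mono (Finset.coe_subset.mpr (s.erase_subset a)) h)
  obtain ⟨u, hut, hux⟩ := ih _ ht t hxt rfl
  by_cases hua : 0 ≤ u a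
  · refine ⟨u, fun y hy => ?_, hux⟩
    rcases Finset.mem_insert.mp (Finset.insert_erase ha ▸ hy) with rfl | hy
    exacts [hua, hut y hy]
  push Not at hua
  -- the projection onto `ker u` along `a`
  set π : V →ₗ[ℝ] V := LinearMap.id - (u a)⁻¹ • u.smulRight a
  have hπ : ∀ z, π z = z - ((u a)⁻¹ * u z) • a := fun z => by
    simp [π, mul_smul]
  have hπa : π a = 0 := by simp [hπ, inv_mul_cancel₀ hua.ne]
  have hπx : π x ∉ PointedCone.hull ℝ (t.image π : Set V) := by
    intro h
    rw [Finset.coe_image, ← LinearMap.coe_restrictScalars {c : ℝ // 0 ≤ c}] at h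
    obtain ⟨y, hy, hπy⟩ := (mem_map.mp ((span_image _).le h))
    have hxy : x = ((u a)⁻¹ * u (x - y)) • a + y := by
      have h0 : π (x - y) = 0 := by simpa [sub_eq_zero] using hπy.symm
      rw [hπ, sub_eq_zero] at h0
      rw [← h0, sub_add_cancel]
    have hc : 0 ≤ (u a)⁻¹ * u (x - y) := by
      have huy := Dual.nonneg_of_mem_hull hut hy
      exact mul_nonneg_of_nonpos_of_nonpos (inv_nonpos.mpr hua.le) (by rw [map_sub]; linarith)
    exact hx (hs ▸ mem_span_insert.mpr ⟨⟨_, hc⟩, y, hy, hxy⟩)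
  obtain ⟨w, hwt, hwx⟩ := ih _ ((Finset.card_image_le).trans_lt ht) (t.image π) hπx rfl
  refine ⟨w ∘ₗ π, fun y hy => ?_, hwx⟩
  rcases Finset.mem_insert.mp (Finset.insert_erase ha ▸ hy) with rfl | hy
  · simp [hπa]
  · exact hwt (π y) (Finset.mem_image_of_mem π hy)

theorem exists_dual_nonneg_span_inter_ker_lt {s : Finset V} {u : Dual ℝ V}
    (hu : ∀ x ∈ s, 0 ≤ u x) {W : Submodule ℝ V}
    (hW : span ℝ ((s : Set V) ∩ LinearMap.ker u) ≤ W) (hsW : ¬ (s : Set V) ⊆ W) :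
    ∃ u' : Dual ℝ V, (∀ x ∈ s, 0 ≤ u' x) ∧ (∀ x ∈ W, u' x = u x) ∧
      span ℝ ((s : Set V) ∩ LinearMap.ker u) < span ℝ ((s : Set V) ∩ LinearMap.ker u') := by
  classical
  obtain ⟨a, has, haW⟩ := Set.not_subset.mp hsW
  obtain ⟨v, hva, hvW⟩ := exists_dual_neg_of_notMem haW
  -- move `u` along `v` until it vanishes on a first generator `b` with `v b < 0`
  obtain ⟨b, hbT, hbmin⟩ := (s.filter (v · < 0)).exists_min_image (fun x => u x / -v x)
    ⟨a, Finset.mem_filter.mpr ⟨has, hva⟩⟩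
  rw [Finset.mem_filter] at hbT
  set c := u b / -v b
  have hc : 0 ≤ c := div_nonneg (hu b hbT.1) (neg_nonneg.mpr hbT.2.le)
  have hZW : ∀ x ∈ (s : Set V) ∩ LinearMap.ker u, x ∈ W := fun x hx => hW (subset_span hx)
  refine ⟨u + c • v, fun x hx => ?_, fun x hx => by simp [hvW x hx], ?_⟩
  · by_cases hvx : v x < 0
    · have := hbmin x (Finset.mem_filter.mpr ⟨hx, hvx⟩)
      rw [le_div_iff₀ (neg_pos.mpr hvx)] at this
      simp only [LinearMap.add_apply, LinearMap.smul_apply, smul_eq_mul]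
      linarith
    · simp only [LinearMap.add_apply, LinearMap.smul_apply, smul_eq_mul]
      nlinarith [hu x hx]
  · refine SetLike.lt_iff_le_and_exists.mpr ⟨span_mono fun x hx => ⟨hx.1, ?_⟩, b, ?_, ?_⟩
    · simp [LinearMap.mem_ker.mp hx.2, hvW x (hZW x hx)]
    · refine subset_span ⟨hbT.1, LinearMap.mem_ker.mpr ?_⟩
      simp only [LinearMap.add_apply, LinearMap.smul_apply, smul_eq_mul, c]
      field_simp [hbT.2.ne]
      ring
    · exact fun hb => hbT.2.ne (hvW b (hW hb))

theorem exists_dual_nonneg_neg_finrank_span_inter_ker (s : Finset V) {m : V}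
    (hm : m ∈ span ℝ (s : Set V)) (hms : m ∉ PointedCone.hull ℝ (s : Set V)) :
    ∃ u : Dual ℝ V, (∀ x ∈ s, 0 ≤ u x) ∧ u m < 0 ∧
      finrank ℝ (span ℝ ((s : Set V) ∩ LinearMap.ker u)) + 1 =
        finrank ℝ (span ℝ (s : Set V)) := by
  have hfin (u : Dual ℝ V) : FiniteDimensional ℝ (span ℝ ((s : Set V) ∩ LinearMap.ker u)) :=
    FiniteDimensional.span_of_finite ℝ (s.finite_toSet.subset Set.inter_subset_left)
  set P := fun u : Dual ℝ V => (∀ x ∈ s, 0 ≤ u x) ∧ u m < 0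
  set D := fun u : Dual ℝ V => finrank ℝ (span ℝ ((s : Set V) ∩ LinearMap.ker u))
  obtain ⟨u, hu, hmax⟩ : ∃ u, P u ∧ ∀ u', P u' → D u' ≤ D u := by
    have hne : (D '' {u | P u}).Nonempty :=
      Set.Nonempty.image D (exists_dual_nonneg_neg_of_notMem_hull s hms)
    have hbdd : BddAbove (D '' {u | P u}) :=
      ⟨_, Set.forall_mem_image.mpr fun u _ => finrank_mono (span_mono Set.inter_subset_left)⟩
    obtain ⟨u, hu, hsup⟩ := Nat.sSup_mem hne hbdd
    exact ⟨u, hu, fun u' hu' => hsup ▸ le_csSup hbdd (Set.mem_image_of_mem D hu')⟩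
  refine ⟨u, hu.1, hu.2, le_antisymm (finrank_lt_finrank_of_lt ?_) ?_⟩
  · refine SetLike.lt_iff_le_and_exists.mpr
      ⟨span_mono Set.inter_subset_left, m, hm, fun h => hu.2.ne ?_⟩
    exact span_le.mpr Set.inter_subset_right h
  · by_contra! hlt
    set W := span ℝ ((s : Set V) ∩ LinearMap.ker u) ⊔ span ℝ {m}
    have hsW : ¬ (s : Set V) ⊆ W := fun h => by
      have h1 : finrank ℝ (span ℝ (s : Set V)) ≤ finrank ℝ W := finrank_mono (span_le.mpr h)
      have h2 : finrank ℝ W ≤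
          finrank ℝ (span ℝ ((s : Set V) ∩ LinearMap.ker u)) + finrank ℝ (span ℝ {m}) :=
        finrank_add_le_finrank_add_finrank _ _
      have h3 : finrank ℝ (span ℝ {m}) ≤ 1 :=
        (finrank_span_le_card ({m} : Set V)).trans (by simp)
      omega
    obtain ⟨u', hu's, hu'W, hlt'⟩ := exists_dual_nonneg_span_inter_ker_lt hu.1 le_sup_left hsW
    have hu'm : u' m = u m := hu'W m (mem_sup_right (mem_span_singleton_self m))
    exact (hmax u' ⟨hu's, hu'm ▸ hu.2⟩).not_gt (finrank_lt_finrank_of_lt hlt')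

end Separation

section Faces

variable {V : Type} [AddCommGroup V] [Module ℝ V]

theorem isFaceOf_inter_ker {C : PointedCone ℝ V} {u : Dual ℝ V} (hu : ∀ x ∈ C, 0 ≤ u x) :
    IsFaceOf ((C : Set V) ∩ LinearMap.ker u) C := by
  refine ⟨Set.inter_subset_left, ⟨C.zero_mem, map_zero u⟩,
    fun x hx y hy =>
      ⟨C.add_mem hx.1 hy.1, by simp [LinearMap.mem_ker.mp hx.2, LinearMap.mem_ker.mp hy.2]⟩,
    fun x hx c hc => ⟨C.smul_mem hc hx.1, by simp [LinearMap.mem_ker.mp hx.2]⟩,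
    fun x hx y hy hxy => ?_⟩
  have hx0 := hu x hx
  have hy0 := hu y hy
  have hxy0 : u x + u y = 0 := by simpa using hxy.2
  exact ⟨⟨hx, LinearMap.mem_ker.mpr (by linarith)⟩,
    ⟨hy, LinearMap.mem_ker.mpr (by linarith)⟩⟩

theorem isCodimOneFace_hull_inter_ker {s : Finset V} {u : Dual ℝ V} (hu : ∀ x ∈ s, 0 ≤ u x)
    {m : V} (hm : m ∈ span ℝ (s : Set V)) (hum : u m ≠ 0)
    (hdim : finrank ℝ (span ℝ ((s : Set V) ∩ LinearMap.ker u)) + 1 =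
      finrank ℝ (span ℝ (s : Set V))) :
    IsCodimOneFace ((PointedCone.hull ℝ (s : Set V) : Set V) ∩ LinearMap.ker u)
      (PointedCone.hull ℝ (s : Set V)) := by
  refine ⟨isFaceOf_inter_ker fun x hx => Dual.nonneg_of_mem_hull hu hx, ?_⟩
  set C := PointedCone.hull ℝ (s : Set V)
  have hspan : span ℝ (C : Set V) = span ℝ (s : Set V) := span_span_of_tower _ _ _
  have hle : span ℝ ((C : Set V) ∩ LinearMap.ker u) ≤ span ℝ (s : Set V) :=
    hspan ▸ span_mono Set.inter_subset_left
  have := Submodule.finiteDimensional_of_le hle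
  have hlower : finrank ℝ (span ℝ ((s : Set V) ∩ LinearMap.ker u)) ≤
      finrank ℝ (span ℝ ((C : Set V) ∩ LinearMap.ker u)) :=
    finrank_mono (span_mono (Set.inter_subset_inter_left _ PointedCone.subset_hull))
  have hupper : finrank ℝ (span ℝ ((C : Set V) ∩ LinearMap.ker u)) <
      finrank ℝ (span ℝ (s : Set V)) := by
    refine finrank_lt_finrank_of_lt (SetLike.lt_iff_le_and_exists.mpr ⟨hle, m, hm, fun h => ?_⟩)
    exact hum (span_le.mpr Set.inter_subset_right h)
  rw [coneDim, coneDim, hspan]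
  omega

theorem exists_isCodimOneFace_dual_neg_of_notMem_hull (s : Finset V) {m : V}
    (hm : m ∈ span ℝ (s : Set V)) (hms : m ∉ PointedCone.hull ℝ (s : Set V)) :
    ∃ u : Dual ℝ V, (∀ x ∈ PointedCone.hull ℝ (s : Set V), 0 ≤ u x) ∧ u m < 0 ∧
      IsCodimOneFace ((PointedCone.hull ℝ (s : Set V) : Set V) ∩ LinearMap.ker u)
        (PointedCone.hull ℝ (s : Set V)) := by
  obtain ⟨u, hu, hum, hdim⟩ := exists_dual_nonneg_neg_finrank_span_inter_ker s hm hms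
  exact ⟨u, fun x hx => Dual.nonneg_of_mem_hull hu hx, hum,
    isCodimOneFace_hull_inter_ker hu hm hum.ne hdim⟩

end Faces

theorem stmt_0_general {V : Type} [AddCommGroup V] [Module ℝ V]
    (M : AddSubgroup V)
    (S : AddSubmonoid V) (hfg : S.FG)
    (hSM : ∀ m : V, m ∈ M ↔ ∃ s ∈ S, ∃ t ∈ S, m = s - t)
    (σS : Set V) (hσS : σS = coneOf (S : Set V))
    (S' : Set V)
    (hS' : S' = {m : V | m ∈ M ∧ ∀ τ : Set V, IsCodimOneFace τ σS →
      ∃ s ∈ S, ∃ t ∈ (S : Set V) ∩ τ, m = s - t}) :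
    (S : Set V) ⊆ S' ∧ S' ⊆ (M : Set V) ∩ σS := by
  obtain ⟨F, rfl⟩ := hfg
  have hσ : σS = PointedCone.hull ℝ (F : Set V) := by
    rw [hσS, coneOf_eq_hull]
    exact congrArg _ span_closure
  subst hσ hS'
  refine ⟨fun s hs => ⟨(hSM s).2 ⟨s, hs, 0, zero_mem _, (sub_zero s).symm⟩,
    fun τ hτ => ⟨s, hs, 0, ⟨zero_mem _, hτ.1.2.1⟩, (sub_zero s).symm⟩⟩, ?_⟩
  rintro m ⟨hmM, hmS'⟩
  refine ⟨hmM, ?_⟩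
  by_contra hmσ
  have hmspan : m ∈ span ℝ (F : Set V) := by
    obtain ⟨s, hs, t, ht, rfl⟩ := (hSM m).1 hmM
    exact sub_mem (closure_subset_span hs) (closure_subset_span ht)
  obtain ⟨u, hu, hum, hface⟩ := exists_isCodimOneFace_dual_neg_of_notMem_hull F
    hmspan hmσ
  obtain ⟨s, hs, t, ⟨-, -, htu⟩, rfl⟩ := hmS' _ hface
  have hus : 0 ≤ u s := hu s (closure_subset_span hs)
  rw [map_sub, LinearMap.mem_ker.mp htu, sub_zero] at hum
  exact hum.not_ge hus

/-- Let `M` be a lattice and `S ⊆ M` a finitely generated subsemigroup with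
`S - S = M`. Let `σS` be the cone generated by `S`. Then the semigroup
`S' = ⋂_i (S - (S ∩ τ_i))`, the intersection over the codimension-one faces `τ_i` of `σS`
(taken inside `M`), satisfies `S ⊆ S' ⊆ M ∩ σS`. -/
theorem stmt_0 {V : Type} [AddCommGroup V] [Module ℝ V] [FiniteDimensional ℝ V]
    (M : AddSubgroup V) (hM : IsLattice M)
    (S : AddSubmonoid V) (hfg : S.FG)
    (hSM : ∀ m : V, m ∈ M ↔ ∃ s ∈ S, ∃ t ∈ S, m = s - t)
    (σS : Set V) (hσS : σS = coneOf (S : Set V))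
    (S' : Set V)
    (hS' : S' = {m : V | m ∈ M ∧ ∀ τ : Set V, IsCodimOneFace τ σS →
      ∃ s ∈ S, ∃ t ∈ (S : Set V) ∩ τ, m = s - t}) :
    (S : Set V) ⊆ S' ∧ S' ⊆ (M : Set V) ∩ σS :=
  stmt_0_general M S hfg hSM σS hσS S' hS'
end

section
/- Let ℳ = (M, Δ, (S_σ)) be a monoidal complex with toric face ring k[ℳ]. Then the sequence 0 → O(X) → ⊕_F O(X_F) → ⊕_{F≠F'} O(X_{F∩F'}) is exact, where the sums run over facets F of Δ; i.e., a collection of regular functions f_F on the irreducible components X_F that pairwise agree on the intersections X_{F∩F'} glues uniquely to a regular function on X = Spec k[ℳ]. -/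
/-!
A monomial `χ^m` lies in both `S_F` and `S_{F'}` exactly when it lies in `S_{F ∩ F'}`, since
`F ∩ F'` is a face of `F`. The compatibility condition therefore makes `f_F(m)` independent of
the facet `F` with `m ∈ S_F`, and these common values glue to a finitely supported function
because there are only finitely many facets.
-/

open scoped BigOperators

/-- A monoidal complex `ℳ = (M, Δ, (S_σ)_{σ ∈ Δ})`: a fan `Δ` of polyhedral cones in the
real vector space `V` together with compatible finitely generated semigroups
`S_σ ⊆ M ∩ σ` generating the cones. -/
structure MonoidalComplex (V : Type) [AddCommGroup V] [Module ℝ V] (M : AddSubgroup V) where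
  cones : Set (Set V)
  sg : Set V → Set V
  cones_finite : cones.Finite
  face_mem : ∀ σ ∈ cones, ∀ τ : Set V, IsFaceOf τ σ → τ ∈ cones
  inter_face : ∀ σ ∈ cones, ∀ σ' ∈ cones, IsFaceOf (σ ∩ σ') σ
  sg_sub : ∀ σ ∈ cones, sg σ ⊆ (M : Set V) ∩ σ
  sg_zero : ∀ σ ∈ cones, (0 : V) ∈ sg σ
  sg_add : ∀ σ ∈ cones, ∀ x ∈ sg σ, ∀ y ∈ sg σ, x + y ∈ sg σ
  sg_face : ∀ σ ∈ cones, ∀ τ : Set V, IsFaceOf τ σ → sg τ = sg σ ∩ τ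
  sg_gen : ∀ σ ∈ cones, coneOf (sg σ) = σ
  sg_fg : ∀ σ ∈ cones, ∃ t : Finset V, (↑t : Set V) ⊆ sg σ ∧
    sg σ ⊆ (AddSubmonoid.closure (↑t : Set V) : Set V)

namespace MonoidalComplex

variable {V : Type} [AddCommGroup V] [Module ℝ V] {M : AddSubgroup V}

/-- A facet is a maximal cone of the fan. -/
def IsFacet (𝓜 : MonoidalComplex V M) (F : Set V) : Prop :=
  F ∈ 𝓜.cones ∧ ∀ σ ∈ 𝓜.cones, F ⊆ σ → σ = F

/-- A cone of `Δ` of codimension one. -/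
def IsCodimOneCone (𝓜 : MonoidalComplex V M) (τ : Set V) : Prop :=
  τ ∈ 𝓜.cones ∧ ∃ F, 𝓜.IsFacet F ∧ IsCodimOneFace τ F

/-- The fan of `𝓜` is 1-connected: any two distinct facets `F ≠ F'` are joined by a chain of
facets containing `F ∩ F'`, consecutive members meeting in a common codimension-one face. -/
def OneConnected (𝓜 : MonoidalComplex V M) : Prop :=
  ∀ F F' : Set V, 𝓜.IsFacet F → 𝓜.IsFacet F' → F ≠ F' →
    ∃ (n : ℕ) (c : ℕ → Set V), c 0 = F ∧ c n = F' ∧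
      (∀ i ≤ n, 𝓜.IsFacet (c i) ∧ F ∩ F' ⊆ c i) ∧
      ∀ i < n, IsCodimOneFace (c i ∩ c (i + 1)) (c i) ∧
        IsCodimOneFace (c i ∩ c (i + 1)) (c (i + 1))

/-- `X = Spec k[ℳ]` satisfies Serre's condition `S_2`: every collection of functions on the
irreducible components which is regular in codimension one and compatible along the
invariant codimension-one subvarieties is the restriction of a global regular function. -/
def IsS2 (k : Type) [Field k] (𝓜 : MonoidalComplex V M) : Prop :=
  ∀ f : Set V → (V →₀ k),
    (∀ F, 𝓜.IsFacet F → ∀ m, f F m ≠ 0 → ∃ s ∈ 𝓜.sg F, ∃ t ∈ 𝓜.sg F, m = s - t) →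
    (∀ τ, 𝓜.IsCodimOneCone τ → ∀ F, 𝓜.IsFacet F → τ ⊆ F →
      ∀ m, f F m ≠ 0 → ∃ s ∈ 𝓜.sg F, ∃ t ∈ 𝓜.sg τ, m = s - t) →
    (∀ τ, 𝓜.IsCodimOneCone τ → ∀ F F', 𝓜.IsFacet F → 𝓜.IsFacet F' → τ ⊆ F → τ ⊆ F' →
      ∀ m, (∃ s ∈ 𝓜.sg τ, ∃ t ∈ 𝓜.sg τ, m = s - t) → f F m = f F' m) →
    ∃ g : V →₀ k, (∀ m, g m ≠ 0 → ∃ σ ∈ 𝓜.cones, m ∈ 𝓜.sg σ) ∧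
      ∀ F, 𝓜.IsFacet F → ∀ m : V, (m ∈ 𝓜.sg F → f F m = g m) ∧ (m ∉ 𝓜.sg F → f F m = 0)

end MonoidalComplex

namespace Finsupp

variable {ι α R : Type*} [Zero R]

theorem existsUnique_glue {I : Set ι} (hI : I.Finite) (S : ι → Set α) (f : ι → α →₀ R)
    (hcompat : ∀ i ∈ I, ∀ j ∈ I, ∀ a ∈ S i, a ∈ S j → f i a = f j a) :
    ∃! g : α →₀ R, (∀ a, g a ≠ 0 → ∃ i ∈ I, a ∈ S i) ∧ ∀ i ∈ I, ∀ a ∈ S i, g a = f i a := by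
  classical
  let Covered (a : α) : Prop := ∃ i ∈ I, a ∈ S i
  let glued (a : α) : R := if h : Covered a then f h.choose a else 0
  have glued_of_not_covered {a : α} (h : ¬Covered a) : glued a = 0 := dif_neg h
  have mem_support {a : α} (ha : glued a ≠ 0) :
      a ∈ hI.toFinset.biUnion fun i => (f i).support := by
    by_cases h : Covered a
    · rw [show glued a = f h.choose a from dif_pos h] at ha
      exact Finset.mem_biUnion.2 ⟨_, hI.mem_toFinset.2 h.choose_spec.1, mem_support_iff.2 ha⟩
    · exact absurd (glued_of_not_covered h) ha
  let g : α →₀ R := onFinset _ glued fun a => mem_support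
  have g_eq (i : ι) (hi : i ∈ I) (a : α) (ha : a ∈ S i) : g a = f i a := by
    have h : Covered a := ⟨i, hi, ha⟩
    show glued a = f i a
    rw [show glued a = f h.choose a from dif_pos h]
    exact hcompat _ h.choose_spec.1 i hi a h.choose_spec.2 ha
  refine ⟨g, ⟨fun a ha => ?_, g_eq⟩, fun g' ⟨hg'_supp, hg'_eq⟩ => ?_⟩
  · by_contra h
    exact ha (glued_of_not_covered h)
  · ext a
    by_cases h : Covered a
    · obtain ⟨i, hi, ha⟩ := h
      rw [hg'_eq i hi a ha, g_eq i hi a ha]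
    · rw [show g a = 0 from glued_of_not_covered h]
      by_contra hne
      exact h (hg'_supp a hne)

end Finsupp

namespace MonoidalComplex

variable {V : Type} [AddCommGroup V] [Module ℝ V] {M : AddSubgroup V} (𝓜 : MonoidalComplex V M)

theorem setOf_isFacet_finite : {F : Set V | 𝓜.IsFacet F}.Finite :=
  𝓜.cones_finite.subset fun _ hF => hF.1

theorem mem_sg_inter {σ σ' : Set V} (hσ : σ ∈ 𝓜.cones) (hσ' : σ' ∈ 𝓜.cones) {m : V}
    (hm : m ∈ 𝓜.sg σ) (hm' : m ∈ 𝓜.sg σ') : m ∈ 𝓜.sg (σ ∩ σ') := by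
  rw [𝓜.sg_face σ hσ _ (𝓜.inter_face σ hσ σ' hσ')]
  exact ⟨hm, (𝓜.sg_sub σ hσ hm).2, (𝓜.sg_sub σ' hσ' hm').2⟩

end MonoidalComplex

theorem stmt_5_general {V : Type} [AddCommGroup V] [Module ℝ V] {M : AddSubgroup V}
    (k : Type) [Field k] (𝓜 : MonoidalComplex V M)
    (f : Set V → (V →₀ k))
    (hcompat : ∀ F F', 𝓜.IsFacet F → 𝓜.IsFacet F' → F ≠ F' →
      ∀ m ∈ 𝓜.sg (F ∩ F'), f F m = f F' m) :
    ∃! g : V →₀ k,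
      (∀ m : V, g m ≠ 0 → ∃ F, 𝓜.IsFacet F ∧ m ∈ 𝓜.sg F) ∧
      ∀ F, 𝓜.IsFacet F → ∀ m ∈ 𝓜.sg F, g m = f F m := by
  refine Finsupp.existsUnique_glue 𝓜.setOf_isFacet_finite 𝓜.sg f fun F hF F' hF' m hm hm' => ?_
  obtain rfl | hne := eq_or_ne F F'
  · rfl
  · exact hcompat F F' hF hF' hne m (𝓜.mem_sg_inter hF.1 hF'.1 hm hm')

/-- For the toric face ring of a monoidal complex `ℳ`, the sequence
`0 → O(X) → ⊕_F O(X_F) → ⊕_{F ≠ F'} O(X_{F∩F'})` is exact: a collection of regular functions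
`f_F` on the irreducible components `X_F` that pairwise agree on the intersections
`X_{F∩F'}` glues uniquely to a regular function on `X = Spec k[ℳ]`. -/
theorem stmt_5 {V : Type} [AddCommGroup V] [Module ℝ V] {M : AddSubgroup V}
    (k : Type) [Field k] (𝓜 : MonoidalComplex V M)
    (f : Set V → (V →₀ k))
    (hsupp : ∀ F, 𝓜.IsFacet F → ∀ m : V, f F m ≠ 0 → m ∈ 𝓜.sg F)
    (hcompat : ∀ F F', 𝓜.IsFacet F → 𝓜.IsFacet F' → F ≠ F' →
      ∀ m ∈ 𝓜.sg (F ∩ F'), f F m = f F' m) :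
    ∃! g : V →₀ k,
      (∀ m : V, g m ≠ 0 → ∃ F, 𝓜.IsFacet F ∧ m ∈ 𝓜.sg F) ∧
      ∀ F, 𝓜.IsFacet F → ∀ m ∈ 𝓜.sg F, g m = f F m :=
  stmt_5_general k 𝓜 f hcompat
end
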